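/- Suppose the true model is Ψ(μ₁•, μ₂•; γ•) and agents minimize KL divergence over models Ψ(μ₁, μ₂; γ) with μ₁, μ₂ ∈ ℝ and γ restricted to a compact interval [γ̲, γ̄] not containing γ•. Let γ̃ = γ̄ if γ• > γ̄, and γ̃ = γ̲ if γ• < γ̲. Then the unique minimizers are μ₁*(c) = μ₁•, μ₂*(c) = μ₂• + (γ• − γ̃)(μ₁• − E_{Ψ•}[X₁ | X₁ ≤ c]), and γ*(c) = γ̃. -/

import Mathlib

open MeasureTheory Set

/-- Gaussian density with mean `a` and variance `s2`. -/
noncomputable def gauss (a s2 x : ℝ) : ℝ :=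
  (Real.sqrt (2 * Real.pi * s2))⁻¹ * Real.exp (-(x - a) ^ 2 / (2 * s2))

/-- Mean of a `N(a, s2)` random variable truncated above at `c`, i.e. `E[X | X ≤ c]`. -/
noncomputable def truncMean (a s2 c : ℝ) : ℝ :=
  (∫ x in Iic c, x * gauss a s2 x) / (∫ x in Iic c, gauss a s2 x)

/-- The (simplified) KL objective when the true model is `Ψ(μ1b, μ2b; γb)` and the
subjective model is `Ψ(μ1, μ2; γ)`, with censoring threshold `c`. -/
noncomputable def xiGamma (μ1b μ2b s2 γb c μ1 μ2 γ : ℝ) : ℝ :=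
  (μ1 - μ1b) ^ 2 / 2 +
    ∫ x in Iic c, gauss μ1b s2 x * (μ2 - γ * (x - μ1) - μ2b + γb * (x - μ1b)) ^ 2 / 2

/-!
Writing `m = E[X₁ | X₁ ≤ c]`, the integrand of the objective is the square of an affine function
`A + B x₁` with `B = γ• − γ`, and centring it at `m` turns the censored integral into
`M₀ (A + B m)² / 2 + B² Q / 2`, where `M₀ = P(X₁ ≤ c) > 0` and `Q = ∫_{x₁ ≤ c} (x₁ − m)² φ > 0`.
So the objective is `(μ₁ − μ₁•)² / 2 + M₀ (A + B m)² / 2 + (γ• − γ)² Q / 2`: the first two terms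
vanish exactly at `μ₁ = μ₁•` and `μ₂ = μ₂*`, and the last is minimised on `[γ̲, γ̄]` only at the
endpoint nearest to `γ•`.
-/

lemma gauss_pos (a : ℝ) {s2 : ℝ} (hs2 : 0 < s2) (x : ℝ) : 0 < gauss a s2 x := by
  unfold gauss
  have : 0 < Real.sqrt (2 * Real.pi * s2) := Real.sqrt_pos.mpr (by positivity)
  positivity

lemma integrable_sub_pow_mul_gauss (a : ℝ) {s2 : ℝ} (hs2 : 0 < s2) (n : ℕ) :
    Integrable (fun x => (x - a) ^ n * gauss a s2 x) := by
  have hmoment : Integrable (fun x : ℝ => x ^ n * Real.exp (-(1 / (2 * s2)) * x ^ 2)) := by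
    simpa [Real.rpow_natCast] using
      integrable_rpow_mul_exp_neg_mul_sq (by positivity : 0 < 1 / (2 * s2))
        (neg_one_lt_zero.trans_le (Nat.cast_nonneg n))
  refine ((hmoment.comp_sub_right a).const_mul (Real.sqrt (2 * Real.pi * s2))⁻¹).congr
    (Filter.Eventually.of_forall fun x => ?_)
  simp only [gauss]
  ring_nf

lemma integrable_pow_mul_gauss (a : ℝ) {s2 : ℝ} (hs2 : 0 < s2) (n : ℕ) :
    Integrable (fun x => x ^ n * gauss a s2 x) := by
  have hbinom : (fun x => x ^ n * gauss a s2 x) = fun x =>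
      ∑ k ∈ Finset.range (n + 1), (a ^ (n - k) * n.choose k) * ((x - a) ^ k * gauss a s2 x) := by
    funext x
    rw [show x ^ n = ((x - a) + a) ^ n by ring, add_pow, Finset.sum_mul]
    exact Finset.sum_congr rfl fun k _ => by ring
  rw [hbinom]
  exact integrable_finsetSum _ fun k _ => (integrable_sub_pow_mul_gauss a hs2 k).const_mul _

section WeightedMoments

variable {μ : Measure ℝ} {w : ℝ → ℝ}

lemma integral_quadratic_mul (h0 : Integrable w μ) (h1 : Integrable (fun x => x * w x) μ)
    (h2 : Integrable (fun x => x ^ 2 * w x) μ) (p q r : ℝ) :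
    ∫ x, (p + q * x + r * x ^ 2) * w x ∂μ =
      p * ∫ x, w x ∂μ + q * ∫ x, x * w x ∂μ + r * ∫ x, x ^ 2 * w x ∂μ := by
  have hsplit : (fun x => (p + q * x + r * x ^ 2) * w x) =
      fun x => p * w x + q * (x * w x) + r * (x ^ 2 * w x) := by
    funext x; ring
  have h01 : Integrable (fun x => p * w x + q * (x * w x)) μ :=
    (h0.const_mul p).add (h1.const_mul q)
  rw [hsplit, integral_add h01 (h2.const_mul r), integral_add (h0.const_mul p) (h1.const_mul q),
    integral_const_mul, integral_const_mul, integral_const_mul]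

lemma integral_mul_affine_sq (h0 : Integrable w μ) (h1 : Integrable (fun x => x * w x) μ)
    (h2 : Integrable (fun x => x ^ 2 * w x) μ) (hmass : ∫ x, w x ∂μ ≠ 0) (A B : ℝ) :
    let m := (∫ x, x * w x ∂μ) / ∫ x, w x ∂μ
    ∫ x, w x * (A + B * x) ^ 2 ∂μ =
      (A + B * m) ^ 2 * (∫ x, w x ∂μ) + B ^ 2 * ∫ x, (x - m) ^ 2 * w x ∂μ := by
  intro m
  have hlhs : (fun x => w x * (A + B * x) ^ 2) =
      fun x => (A ^ 2 + 2 * A * B * x + B ^ 2 * x ^ 2) * w x := by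
    funext x; ring
  have hcentred : (fun x => (x - m) ^ 2 * w x) =
      fun x => (m ^ 2 + -2 * m * x + 1 * x ^ 2) * w x := by
    funext x; ring
  rw [hlhs, hcentred, integral_quadratic_mul h0 h1 h2, integral_quadratic_mul h0 h1 h2]
  simp only [m]
  field_simp
  ring

end WeightedMoments

lemma setIntegral_pos_of_ae_pos {μ : Measure ℝ} {s : Set ℝ} {f : ℝ → ℝ} (hs : μ s ≠ 0)
    (hf : IntegrableOn f s μ) (hpos : ∀ᵐ x ∂μ, 0 < f x) : 0 < ∫ x in s, f x ∂μ := by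
  rw [setIntegral_pos_iff_support_of_nonneg_ae
    (ae_restrict_of_ae (hpos.mono fun _ hx => hx.le)) hf]
  have hnull : μ (Function.support f)ᶜ = 0 :=
    measure_mono_null (fun x hx => by simp_all) (ae_iff.mp hpos)
  rw [inter_comm, measure_inter_conull hnull]
  exact pos_iff_ne_zero.mpr hs

noncomputable def truncMass (a s2 c : ℝ) : ℝ :=
  ∫ x in Iic c, gauss a s2 x

noncomputable def truncSpread (a s2 c : ℝ) : ℝ :=
  ∫ x in Iic c, (x - truncMean a s2 c) ^ 2 * gauss a s2 x

lemma truncMass_pos (a : ℝ) {s2 : ℝ} (hs2 : 0 < s2) (c : ℝ) : 0 < truncMass a s2 c :=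
  setIntegral_pos_of_ae_pos (by simp [Real.volume_Iic])
    (by simpa using (integrable_pow_mul_gauss a hs2 0).integrableOn)
    (Filter.Eventually.of_forall (gauss_pos a hs2))

lemma truncSpread_pos (a : ℝ) {s2 : ℝ} (hs2 : 0 < s2) (c : ℝ) : 0 < truncSpread a s2 c := by
  refine setIntegral_pos_of_ae_pos (by simp [Real.volume_Iic]) ?_
    ((Measure.ae_ne volume (truncMean a s2 c)).mono fun x hx =>
      mul_pos (sq_pos_of_ne_zero (sub_ne_zero.mpr hx)) (gauss_pos a hs2 x))
  have h0 := (integrable_pow_mul_gauss a hs2 0).const_mul (truncMean a s2 c ^ 2)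
  have h1 := (integrable_pow_mul_gauss a hs2 1).const_mul (-2 * truncMean a s2 c)
  have h2 := integrable_pow_mul_gauss a hs2 2
  refine ((h0.add h1).add h2).integrableOn.congr_fun (fun x _ => ?_) measurableSet_Iic
  simp only [Pi.add_apply]
  ring

lemma xiGamma_eq (μ1b μ2b : ℝ) {s2 : ℝ} (hs2 : 0 < s2) (γb c μ1 μ2 γ : ℝ) :
    xiGamma μ1b μ2b s2 γb c μ1 μ2 γ =
      (μ1 - μ1b) ^ 2 / 2
        + truncMass μ1b s2 c
          * (μ2 - μ2b + γ * μ1 - γb * μ1b + (γb - γ) * truncMean μ1b s2 c) ^ 2 / 2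
        + (γb - γ) ^ 2 * truncSpread μ1b s2 c / 2 := by
  have hw k := (integrable_pow_mul_gauss μ1b hs2 k).integrableOn (s := Iic c)
  have hcentre := integral_mul_affine_sq
    (hw 0 |>.congr_fun (fun x _ => by simp) measurableSet_Iic)
    (hw 1 |>.congr_fun (fun x _ => by simp) measurableSet_Iic) (hw 2)
    (truncMass_pos μ1b hs2 c).ne' (μ2 - μ2b + γ * μ1 - γb * μ1b) (γb - γ)
  have hintegrand :
      (fun x => gauss μ1b s2 x * (μ2 - γ * (x - μ1) - μ2b + γb * (x - μ1b)) ^ 2 / 2) =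
        fun x => gauss μ1b s2 x * (μ2 - μ2b + γ * μ1 - γb * μ1b + (γb - γ) * x) ^ 2 / 2 := by
    funext x; ring
  rw [xiGamma, hintegrand, integral_div, hcentre]
  simp only [truncMass, truncSpread, truncMean]
  ring

lemma sq_sub_nearest_endpoint_lt {γb lo hi γ : ℝ} (hle : lo ≤ hi) (hout : γb < lo ∨ hi < γb)
    (hγ : γ ∈ Icc lo hi) (hne : γ ≠ if hi < γb then hi else lo) :
    (γb - if hi < γb then hi else lo) ^ 2 < (γb - γ) ^ 2 := by
  rcases hout with hbelow | habove
  · rw [if_neg (by linarith)] at hne ⊢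
    have : lo < γ := lt_of_le_of_ne hγ.1 (Ne.symm hne)
    nlinarith
  · rw [if_pos habove] at hne ⊢
    have : γ < hi := lt_of_le_of_ne hγ.2 hne
    nlinarith

/-- If `γ` is restricted to a compact interval `[γlo, γhi]` not containing the true
`γb`, then the unique KL minimizers are `μ₁* = μ₁•`,
`μ₂* = μ₂• + (γ• − γ̃)(μ₁• − E[X₁|X₁ ≤ c])` and `γ* = γ̃`, where `γ̃` is the endpoint of
the interval closest to `γ•`. -/
theorem pseudo_true_with_gamma (μ1b μ2b s2 γb γlo γhi c : ℝ) (hs2 : 0 < s2)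
    (hle : γlo ≤ γhi) (hout : γb < γlo ∨ γhi < γb) :
    let γt := if γhi < γb then γhi else γlo
    let μ2s := μ2b + (γb - γt) * (μ1b - truncMean μ1b s2 c)
    (∀ μ1 μ2 γ : ℝ, γ ∈ Icc γlo γhi →
        xiGamma μ1b μ2b s2 γb c μ1b μ2s γt ≤ xiGamma μ1b μ2b s2 γb c μ1 μ2 γ) ∧
    (∀ μ1 μ2 γ : ℝ, γ ∈ Icc γlo γhi →
        (∀ μ1' μ2' γ' : ℝ, γ' ∈ Icc γlo γhi →
            xiGamma μ1b μ2b s2 γb c μ1 μ2 γ ≤ xiGamma μ1b μ2b s2 γb c μ1' μ2' γ') →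
        μ1 = μ1b ∧ μ2 = μ2s ∧ γ = γt) := by
  intro γt μ2s
  have hM := truncMass_pos μ1b hs2 c
  have hQ := truncSpread_pos μ1b hs2 c
  have hγt : γt ∈ Icc γlo γhi := by
    simp only [γt]; split_ifs <;> simp [hle]
  have hopt :
      xiGamma μ1b μ2b s2 γb c μ1b μ2s γt = (γb - γt) ^ 2 * truncSpread μ1b s2 c / 2 := by
    rw [xiGamma_eq _ _ hs2]; simp only [μ2s]; ring
  have hγ_le : ∀ γ ∈ Icc γlo γhi, (γb - γt) ^ 2 ≤ (γb - γ) ^ 2 := fun γ hγ => by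
    rcases eq_or_ne γ γt with rfl | hne
    · rfl
    · exact (sq_sub_nearest_endpoint_lt hle hout hγ hne).le
  refine ⟨fun μ1 μ2 γ hγ => ?_, fun μ1 μ2 γ hγ hmin => ?_⟩
  · rw [hopt, xiGamma_eq _ _ hs2]
    nlinarith [hγ_le γ hγ, sq_nonneg (μ1 - μ1b),
      mul_nonneg hM.le (sq_nonneg (μ2 - μ2b + γ * μ1 - γb * μ1b + (γb - γ) * truncMean μ1b s2 c))]
  · have h := hmin μ1b μ2s γt hγt
    rw [hopt, xiGamma_eq _ _ hs2] at h
    set r := μ2 - μ2b + γ * μ1 - γb * μ1b + (γb - γ) * truncMean μ1b s2 c with hr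
    have hr2 := mul_nonneg hM.le (sq_nonneg r)
    have hγ : γ = γt := by
      by_contra hne
      nlinarith [mul_lt_mul_of_pos_right (sq_sub_nearest_endpoint_lt hle hout hγ hne) hQ,
        sq_nonneg (μ1 - μ1b)]
    subst hγ
    have hμ1 : μ1 - μ1b = 0 :=
      pow_eq_zero_iff two_ne_zero |>.mp (by nlinarith [sq_nonneg (μ1 - μ1b)])
    have hr0 : r = 0 :=
      pow_eq_zero_iff two_ne_zero |>.mp (by nlinarith [sq_nonneg (μ1 - μ1b), sq_nonneg r])
    refine ⟨by linarith, ?_, rfl⟩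
    rw [sub_eq_zero.mp hμ1] at hr
    simp only [μ2s]
    linear_combination hr.symm.trans hr0
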